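/- arXiv:1808.08844 — 8 statements merged into one kernel-verified Lean document; each statement's English description precedes it below -/
import Mathlib

section
/- The Alexander operator C_0(f)(z) = ∫_0^z f(w)/w dw is a bounded linear operator on B_α^0 with operator norm exactly 1: for every f ∈ B_α^0, ‖C_0(f)‖_{B_α} ≤ ‖f‖_{B_α}, and equality holds for f(z) = z. -/
/-!
Since `(C₀ f)' = f(z)/z`, the first conjunct is `‖C₀ f‖_{B_α} ≤ ‖f‖_{B_α}`, and since `C₀ z = z`,
the second says `‖z‖_{B_α} = 1`.

The weight `(1 - ‖w‖²)^α` decreases in `‖w‖`, so `‖f'‖ ≤ M / (1 - ‖z‖²)^α` on `‖w‖ ≤ ‖z‖`,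
and the mean value inequality with `f 0 = 0` gives `‖f z‖ ≤ ‖z‖ · M / (1 - ‖z‖²)^α`.
-/

open Metric

section BlochWeight

variable {E : Type*} [SeminormedAddCommGroup E] {α : ℝ}

lemma one_sub_norm_sq_rpow_le_of_norm_le {w z : E} (hα : 0 ≤ α) (hz : ‖z‖ ≤ 1)
    (hwz : ‖w‖ ≤ ‖z‖) : (1 - ‖z‖ ^ 2) ^ α ≤ (1 - ‖w‖ ^ 2) ^ α :=
  Real.rpow_le_rpow (by nlinarith [norm_nonneg z]) (by nlinarith [norm_nonneg w]) hα

lemma one_sub_norm_sq_rpow_le_one {z : E} (hα : 0 ≤ α) (hz : ‖z‖ ≤ 1) :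
    (1 - ‖z‖ ^ 2) ^ α ≤ 1 :=
  Real.rpow_le_one (by nlinarith [norm_nonneg z]) (by nlinarith [norm_nonneg z]) hα

end BlochWeight

lemma norm_le_mul_norm_of_norm_deriv_le {𝕜 G : Type*} [RCLike 𝕜] [NormedAddCommGroup G]
    [NormedSpace 𝕜 G] {f : 𝕜 → G} {C : ℝ} {z : 𝕜} (hf0 : f 0 = 0)
    (hf : ∀ w ∈ closedBall (0 : 𝕜) ‖z‖, DifferentiableAt 𝕜 f w)
    (bound : ∀ w ∈ closedBall (0 : 𝕜) ‖z‖, ‖deriv f w‖ ≤ C) : ‖f z‖ ≤ C * ‖z‖ := by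
  simpa [hf0] using (convex_closedBall (0 : 𝕜) ‖z‖).norm_image_sub_le_of_norm_deriv_le hf bound
    (mem_closedBall_self (norm_nonneg z)) (by simp)

lemma one_sub_norm_sq_rpow_mul_norm_div_le {α M : ℝ} (hα : 0 ≤ α) {f : ℂ → ℂ}
    (hf : DifferentiableOn ℂ f (ball 0 1)) (hf0 : f 0 = 0)
    (hM : ∀ w ∈ ball (0 : ℂ) 1, (1 - ‖w‖ ^ 2) ^ α * ‖deriv f w‖ ≤ M)
    {z : ℂ} (hz : z ∈ ball (0 : ℂ) 1) (hz0 : z ≠ 0) :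
    (1 - ‖z‖ ^ 2) ^ α * ‖f z / z‖ ≤ M := by
  have hz1 : ‖z‖ < 1 := mem_ball_zero_iff.mp hz
  have hweight : 0 < (1 - ‖z‖ ^ 2) ^ α := Real.rpow_pos_of_pos (by nlinarith [norm_nonneg z]) α
  have hsub : closedBall (0 : ℂ) ‖z‖ ⊆ ball 0 1 := closedBall_subset_ball hz1
  have hderiv : ∀ w ∈ closedBall (0 : ℂ) ‖z‖, ‖deriv f w‖ ≤ M / (1 - ‖z‖ ^ 2) ^ α := by
    intro w hw
    rw [le_div_iff₀' hweight]
    calc (1 - ‖z‖ ^ 2) ^ α * ‖deriv f w‖ ≤ (1 - ‖w‖ ^ 2) ^ α * ‖deriv f w‖ := 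
          mul_le_mul_of_nonneg_right (one_sub_norm_sq_rpow_le_of_norm_le hα hz1.le
            (mem_closedBall_zero_iff.mp hw)) (norm_nonneg _)
      _ ≤ M := hM w (hsub hw)
  have hmvt := norm_le_mul_norm_of_norm_deriv_le hf0
    (fun w hw => hf.differentiableAt (isOpen_ball.mem_nhds (hsub hw))) hderiv
  rw [norm_div, ← le_div_iff₀' hweight, div_le_iff₀ (norm_pos_iff.mpr hz0)]
  exact hmvt

/-- The Alexander operator C_0(f)(z) = ∫_0^z f(w)/w dw has operator norm exactly 1 on B_α^0:
its Bloch seminorm sup (1-|z|²)^α |f(z)/z| is at most ‖f‖_{B_α}, and for f(z) = z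
(whose image is again f(z) = z) the norm sup (1-|z|²)^α |deriv id| equals 1 = ‖id‖_{B_α}. -/
theorem stmt_7 (α : ℝ) (hα : 0 < α) :
    (∀ (f : ℂ → ℂ) (M : ℝ), DifferentiableOn ℂ f (Metric.ball (0:ℂ) 1) → f 0 = 0 →
      (∀ z ∈ Metric.ball (0:ℂ) 1, (1 - ‖z‖ ^ 2) ^ α * ‖deriv f z‖ ≤ M) →
      ∀ z ∈ Metric.ball (0:ℂ) 1, z ≠ 0 → (1 - ‖z‖ ^ 2) ^ α * ‖f z / z‖ ≤ M) ∧
    IsLUB {c : ℝ | ∃ z ∈ Metric.ball (0:ℂ) 1,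
      c = (1 - ‖z‖ ^ 2) ^ α * ‖deriv (fun w : ℂ => w) z‖} 1 := by
  refine ⟨fun f M hf hf0 hM z hz hz0 =>
    one_sub_norm_sq_rpow_mul_norm_div_le hα.le hf hf0 hM hz hz0, ?_, ?_⟩
  · rintro c ⟨z, hz, rfl⟩
    simpa using one_sub_norm_sq_rpow_le_one hα.le (mem_ball_zero_iff.mp hz).le
  · exact fun b hb => hb ⟨0, mem_ball_self one_pos, by simp⟩
end

section
/- Let β > α > 0. The β-Cesàro operator C_β is unbounded on B_α^0: for the function f(z) = z (which lies in B_α^0), sup_{z∈D} (1-|z|^2)^α |f(z)/(z(1-z)^β)| = ∞; indeed along z = t ∈ (0,1), (1+t)^α/(1-t)^{β-α} → ∞ as t → 1. -/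
/-! Along the radius `z = t ∈ (0, 1)` the weight `(1 - t²)^α = (1 + t)^α (1 - t)^α` only partly
cancels the singularity `(1 - t)^(-β)` of `(C_β z)' = (1 - z)^(-β)`, leaving
`(1 + t)^α / (1 - t)^(β - α)`, which blows up at `t = 1` because `β > α`. -/

open Filter Set Topology

lemma not_bddAbove_of_tendsto_atTop_of_eventually_mem {ι β : Type*} [Preorder β] [NoMaxOrder β]
    {l : Filter ι} [l.NeBot] {f : ι → β} {S : Set β} (hf : Tendsto f l atTop)
    (hS : ∀ᶠ x in l, f x ∈ S) : ¬BddAbove S := by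
  rintro ⟨M, hM⟩
  obtain ⟨x, hMx, hxS⟩ := ((hf.eventually_gt_atTop M).and hS).exists
  exact (hM hxS).not_gt hMx

lemma tendsto_one_add_rpow_div_one_sub_rpow_atTop (α : ℝ) {γ : ℝ} (hγ : 0 < γ) :
    Tendsto (fun t : ℝ => (1 + t) ^ α / (1 - t) ^ γ) (𝓝[<] 1) atTop := by
  have hnum : Tendsto (fun t : ℝ => (1 + t) ^ α) (𝓝[<] 1) (𝓝 ((1 + 1) ^ α)) :=
    (ContinuousAt.rpow_const (by fun_prop) (Or.inl (by norm_num))).tendsto.mono_left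
      nhdsWithin_le_nhds
  have hden : Tendsto (fun t : ℝ => (1 - t) ^ γ) (𝓝[<] 1) (𝓝[>] 0) := by
    refine tendsto_nhdsWithin_iff.mpr ⟨?_, ?_⟩
    · have hcont : ContinuousAt (fun t : ℝ => (1 - t) ^ γ) 1 :=
        ContinuousAt.rpow_const (by fun_prop) (Or.inr hγ.le)
      simpa [Real.zero_rpow hγ.ne'] using hcont.tendsto.mono_left nhdsWithin_le_nhds
    · filter_upwards [self_mem_nhdsWithin] with t (ht : t < 1)
      exact Real.rpow_pos_of_pos (sub_pos.mpr ht) γ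
  simpa only [div_eq_mul_inv, Pi.inv_apply] using
    hnum.pos_mul_atTop (by positivity) hden.inv_tendsto_nhdsGT_zero

lemma one_sub_norm_sq_rpow_mul_norm_div_cpow (α β : ℝ) {t : ℝ} (ht : t ∈ Ioo (0 : ℝ) 1) :
    (1 - ‖(t : ℂ)‖ ^ 2) ^ α * ‖(t : ℂ) / (t * (1 - t) ^ (β : ℂ))‖
      = (1 + t) ^ α / (1 - t) ^ (β - α) := by
  obtain ⟨ht0, ht1⟩ := ht
  have h1t : 0 < 1 - t := sub_pos.mpr ht1
  have hcpow : ‖(1 - (t : ℂ)) ^ (β : ℂ)‖ = (1 - t) ^ β := by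
    rw [← Complex.ofReal_one, ← Complex.ofReal_sub, Complex.norm_cpow_eq_rpow_re_of_pos h1t]
    simp
  rw [div_mul_cancel_left₀ (by exact_mod_cast ht0.ne'), norm_inv, hcpow, Complex.norm_real,
    Real.norm_of_nonneg ht0.le, show 1 - t ^ 2 = (1 + t) * (1 - t) by ring,
    Real.mul_rpow (by linarith) h1t.le, Real.rpow_sub h1t]
  field_simp

theorem stmt_9_general (α β : ℝ) (hβ : α < β) :
    ¬ BddAbove {c : ℝ | ∃ z ∈ Metric.ball (0:ℂ) 1, z ≠ 0 ∧
        c = (1 - ‖z‖ ^ 2) ^ α * ‖z / (z * (1 - z) ^ (β : ℂ))‖} ∧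
    Filter.Tendsto (fun t : ℝ => (1 + t) ^ α / (1 - t) ^ (β - α))
      (nhdsWithin 1 (Set.Ioo (0:ℝ) 1)) Filter.atTop := by
  have htendsto : Tendsto (fun t : ℝ => (1 + t) ^ α / (1 - t) ^ (β - α))
      (𝓝[Ioo 0 1] 1) atTop :=
    (tendsto_one_add_rpow_div_one_sub_rpow_atTop α (sub_pos.mpr hβ)).mono_left
      (nhdsWithin_mono _ Ioo_subset_Iio_self)
  have : (𝓝[Ioo (0 : ℝ) 1] 1).NeBot := right_nhdsWithin_Ioo_neBot one_pos
  refine ⟨not_bddAbove_of_tendsto_atTop_of_eventually_mem htendsto ?_, htendsto⟩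
  filter_upwards [self_mem_nhdsWithin] with t ht
  refine ⟨t, ?_, by exact_mod_cast ht.1.ne', (one_sub_norm_sq_rpow_mul_norm_div_cpow α β ht).symm⟩
  simpa [abs_of_pos ht.1] using ht.2

/-- Example 2.6: for β > α > 0 the β-Cesàro operator is unbounded on B_α^0,
witnessed by f(z) = z: the Bloch seminorm data of C_β(f) is unbounded, and along
z = t ∈ (0,1) the quantity (1+t)^α/(1-t)^(β-α) tends to ∞ as t → 1⁻. -/
theorem stmt_9 (α β : ℝ) (hα : 0 < α) (hβ : α < β) :
    ¬ BddAbove {c : ℝ | ∃ z ∈ Metric.ball (0:ℂ) 1, z ≠ 0 ∧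
        c = (1 - ‖z‖ ^ 2) ^ α * ‖z / (z * (1 - z) ^ (β : ℂ))‖} ∧
    Filter.Tendsto (fun t : ℝ => (1 + t) ^ α / (1 - t) ^ (β - α))
      (nhdsWithin 1 (Set.Ioo (0:ℝ) 1)) Filter.atTop :=
  stmt_9_general α β hβ
end

section
/- Let α ≥ 1 and β ≥ α. The function f(z) = Log(1-z) (principal branch) belongs to B_α^0, and sup over t ∈ (0,1) of (1-t^2)^α |log(1-t)| / (t(1-t)^β) is infinite. Hence the β-Cesàro operator is unbounded on B_α^0 for β ≥ α ≥ 1. -/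
/-!
The derivative of `Log (1 - z)` is `-1 / (1 - z)`, and `1 - ‖z‖ ≤ ‖1 - z‖`, so for `α ≥ 1` the
Bloch weight gives `(1 - ‖z‖²)^α / ‖1 - z‖ ≤ (1 - ‖z‖²) / (1 - ‖z‖) = 1 + ‖z‖ ≤ 2`.
For `0 ≤ α ≤ β` and `t ∈ (0, 1)` one has `t (1 - t)^β ≤ (1 - t)^α ≤ (1 - t²)^α`, so the Cesàro
quotient dominates `|log (1 - t)|`, which is unbounded as `t → 1`.
-/

open Complex Set

lemma one_sub_mem_slitPlane {z : ℂ} (hz : ‖z‖ < 1) : 1 - z ∈ slitPlane := by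
  simpa [sub_eq_add_neg] using mem_slitPlane_of_norm_lt_one (z := -z) (by simpa using hz)

lemma hasDerivAt_log_one_sub {z : ℂ} (hz : 1 - z ∈ slitPlane) :
    HasDerivAt (fun w : ℂ => log (1 - w)) (-1 / (1 - z)) z :=
  ((hasDerivAt_id z).const_sub 1).clog hz

lemma one_sub_sq_rpow_div_norm_one_sub_le_two {α : ℝ} (hα : 1 ≤ α) {z : ℂ} (hz : ‖z‖ < 1) :
    (1 - ‖z‖ ^ 2) ^ α / ‖1 - z‖ ≤ 2 := by
  have hr : 0 < 1 - ‖z‖ := by linarith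
  have hsq : 0 < 1 - ‖z‖ ^ 2 := by nlinarith [norm_nonneg z]
  have hlb : 1 - ‖z‖ ≤ ‖1 - z‖ := by simpa using norm_sub_norm_le (1 : ℂ) z
  calc (1 - ‖z‖ ^ 2) ^ α / ‖1 - z‖
      ≤ (1 - ‖z‖ ^ 2) / (1 - ‖z‖) := by
        gcongr
        simpa using Real.rpow_le_rpow_of_exponent_ge hsq (by nlinarith) hα
    _ = 1 + ‖z‖ := by field_simp; ring
    _ ≤ 2 := by linarith

lemma mul_one_sub_rpow_le_one_sub_sq_rpow {α β t : ℝ} (hα : 0 ≤ α) (hβ : α ≤ β)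
    (ht : t ∈ Ioo (0 : ℝ) 1) : t * (1 - t) ^ β ≤ (1 - t ^ 2) ^ α := by
  obtain ⟨ht0, ht1⟩ := ht
  have hpos : 0 < 1 - t := by linarith
  calc t * (1 - t) ^ β ≤ (1 - t) ^ β := mul_le_of_le_one_left (by positivity) ht1.le
    _ ≤ (1 - t) ^ α := Real.rpow_le_rpow_of_exponent_ge hpos (by linarith) hβ
    _ ≤ (1 - t) ^ α * (1 + t) ^ α :=
        le_mul_of_one_le_right (by positivity) (Real.one_le_rpow (by linarith) hα)
    _ = (1 - t ^ 2) ^ α := by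
        rw [← Real.mul_rpow hpos.le (by linarith)]
        ring_nf

lemma abs_log_one_sub_le_cesaro_quotient {α β t : ℝ} (hα : 0 ≤ α) (hβ : α ≤ β)
    (ht : t ∈ Ioo (0 : ℝ) 1) :
    |Real.log (1 - t)| ≤ (1 - t ^ 2) ^ α * |Real.log (1 - t)| / (t * (1 - t) ^ β) := by
  have hden : 0 < t * (1 - t) ^ β := mul_pos ht.1 (Real.rpow_pos_of_pos (by linarith [ht.2]) β)
  rw [le_div_iff₀ hden, mul_comm]
  exact mul_le_mul_of_nonneg_right (mul_one_sub_rpow_le_one_sub_sq_rpow hα hβ ht) (abs_nonneg _)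

lemma exists_mem_Ioo_lt_abs_log_one_sub (x : ℝ) :
    ∃ t ∈ Ioo (0 : ℝ) 1, x < |Real.log (1 - t)| := by
  obtain ⟨y, hxy, hy⟩ : ∃ y, x < y ∧ 0 < y := ⟨max x 0 + 1, by linarith [le_max_left x 0], by positivity⟩
  refine ⟨1 - Real.exp (-y), ⟨?_, by linarith [Real.exp_pos (-y)]⟩, ?_⟩
  · linarith [Real.exp_lt_one_iff.mpr (neg_neg_of_pos hy)]
  · rwa [sub_sub_cancel, Real.log_exp, abs_neg, abs_of_pos hy]

/-- Example 2.7: f(z) = Log(1-z) lies in B_α^0 for α ≥ 1, but for β ≥ α the quantity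
(1-t²)^α |log(1-t)|/(t(1-t)^β) is unbounded over t ∈ (0,1); hence the β-Cesàro
operator is unbounded on B_α^0 for β ≥ α ≥ 1. -/
theorem stmt_10 (α β : ℝ) (hα : 1 ≤ α) (hβ : α ≤ β) :
    DifferentiableOn ℂ (fun z : ℂ => Complex.log (1 - z)) (Metric.ball (0:ℂ) 1) ∧
    Complex.log (1 - (0:ℂ)) = 0 ∧
    BddAbove {c : ℝ | ∃ z ∈ Metric.ball (0:ℂ) 1,
      c = (1 - ‖z‖ ^ 2) ^ α * ‖deriv (fun w : ℂ => Complex.log (1 - w)) z‖} ∧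
    ¬ BddAbove {c : ℝ | ∃ t ∈ Set.Ioo (0:ℝ) 1,
      c = (1 - t ^ 2) ^ α * |Real.log (1 - t)| / (t * (1 - t) ^ β)} := by
  have hderiv : ∀ z ∈ Metric.ball (0 : ℂ) 1,
      HasDerivAt (fun w : ℂ => log (1 - w)) (-1 / (1 - z)) z := fun z hz =>
    hasDerivAt_log_one_sub (one_sub_mem_slitPlane (mem_ball_zero_iff.mp hz))
  refine ⟨fun z hz => (hderiv z hz).differentiableAt.differentiableWithinAt, by simp,
    ⟨2, ?_⟩, ?_⟩
  · rintro _ ⟨z, hz, rfl⟩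
    rw [(hderiv z hz).deriv, norm_div, norm_neg, norm_one, ← div_eq_mul_one_div]
    exact one_sub_sq_rpow_div_norm_one_sub_le_two hα (mem_ball_zero_iff.mp hz)
  · rw [not_bddAbove_iff]
    intro x
    obtain ⟨t, ht, hxt⟩ := exists_mem_Ioo_lt_abs_log_one_sub x
    exact ⟨_, ⟨t, ht, rfl⟩,
      hxt.trans_le (abs_log_one_sub_le_cesaro_quotient (by linarith) hβ ht)⟩
end

section
/- For α > 0, the function f(z) = z/(1-z)^α belongs to B_{α+1}^0, and for β > 1, sup over t ∈ (0,1) of (1-t^2)^{α+1} / ((1-t)^{α+β}) = sup (1+t)^{α+1}/(1-t)^{β-1} is infinite. Hence the β-Cesàro operator is unbounded on B_{α+1}^0 for β > 1. -/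
/-!
Put `r = ‖1 - z‖`. The derivative of `z (1 - z)^(-α)` is
`((1 - z)^α + α z (1 - z)^(α - 1)) / (1 - z)^(2α)`, of modulus at most `(r + α) / r^(α + 1)`,
while `1 - ‖z‖² ≤ 2 r`; so `(1 - ‖z‖²)^(α + 1) ‖f'(z)‖ ≤ 2^(α + 1) (r + α) ≤ 2^(α + 1) (2 + α)`.
The other quantity is unbounded because, as `t → 1⁻`, its numerator tends to `2^(α + 1) > 0`
and its denominator to `0⁺`.
-/

open Complex Filter Set Topology

theorem tendsto_one_add_rpow_div_one_sub_rpow_nhdsLT_one (a : ℝ) {γ : ℝ} (hγ : 0 < γ) :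
    Tendsto (fun t : ℝ => (1 + t) ^ a / (1 - t) ^ γ) (𝓝[<] 1) atTop := by
  have hnum : Tendsto (fun t : ℝ => (1 + t) ^ a) (𝓝[<] 1) (𝓝 (2 ^ a)) := by
    have : ContinuousAt (fun t : ℝ => (1 + t) ^ a) 1 :=
      (continuousAt_const.add continuousAt_id).rpow_const (Or.inl (by norm_num))
    simpa [one_add_one_eq_two] using this.tendsto.mono_left nhdsWithin_le_nhds
  have hden : Tendsto (fun t : ℝ => (1 - t) ^ γ) (𝓝[<] 1) (𝓝[>] 0) := by
    refine tendsto_nhdsWithin_iff.2 ⟨?_, ?_⟩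
    · have : ContinuousAt (fun t : ℝ => (1 - t) ^ γ) 1 :=
        (continuousAt_const.sub continuousAt_id).rpow_const (Or.inr hγ.le)
      simpa [Real.zero_rpow hγ.ne'] using this.tendsto.mono_left nhdsWithin_le_nhds
    · filter_upwards [self_mem_nhdsWithin] with t (ht : t < 1)
      exact Real.rpow_pos_of_pos (sub_pos.2 ht) γ
  simpa only [div_eq_mul_inv, Function.comp_def] using
    hnum.pos_mul_atTop (by positivity) (tendsto_inv_nhdsGT_zero.comp hden)

theorem not_bddAbove_one_add_rpow_div_one_sub_rpow (a : ℝ) {γ : ℝ} (hγ : 0 < γ) :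
    ¬ BddAbove {c : ℝ | ∃ t ∈ Ioo (0 : ℝ) 1, c = (1 + t) ^ a / (1 - t) ^ γ} := by
  rintro ⟨M, hM⟩
  obtain ⟨t, hMt, ht⟩ :=
    (((tendsto_one_add_rpow_div_one_sub_rpow_nhdsLT_one a hγ).eventually_gt_atTop M).and
      (Ioo_mem_nhdsLT zero_lt_one)).exists
  exact (hM ⟨t, ht, rfl⟩).not_gt hMt

theorem hasDerivAt_div_one_sub_cpow (a : ℂ) {z : ℂ} (hz : ‖z‖ < 1) :
    HasDerivAt (fun w : ℂ => w / (1 - w) ^ a)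
      (((1 - z) ^ a + a * z * (1 - z) ^ (a - 1)) / ((1 - z) ^ a) ^ 2) z := by
  have hslit : 1 - z ∈ slitPlane := by
    simpa [sub_eq_add_neg] using mem_slitPlane_of_norm_lt_one (z := -z) (by simpa using hz)
  have hden : HasDerivAt (fun w : ℂ => (1 - w) ^ a) (a * (1 - z) ^ (a - 1) * -1) z :=
    ((hasDerivAt_id z).const_sub 1).cpow_const hslit
  refine ((hasDerivAt_id' z).fun_div hden ?_).congr_deriv (by ring)
  simp [cpow_eq_zero_iff, slitPlane_ne_zero hslit]

theorem norm_deriv_div_one_sub_cpow_le {α : ℝ} (hα : 0 ≤ α) {z : ℂ} (hz : ‖z‖ < 1) :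
    ‖deriv (fun w : ℂ => w / (1 - w) ^ (α : ℂ)) z‖ ≤ (‖1 - z‖ + α) / ‖1 - z‖ ^ (α + 1) := by
  set r := ‖1 - z‖
  have hr : 0 < r := norm_pos_iff.2 (sub_ne_zero.2 fun h => by simp [← h] at hz)
  set s := r ^ (α - 1)
  have hs : 0 < s := Real.rpow_pos_of_pos hr _
  have hrα : r ^ α = s * r := by rw [← Real.rpow_add_one hr.ne']; ring_nf
  have hrα1 : r ^ (α + 1) = s * r ^ 2 := by
    rw [← Real.rpow_natCast, ← Real.rpow_add hr]; ring_nf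
  have hA : ‖(1 - z) ^ (α : ℂ)‖ = r ^ α := norm_cpow_real _ _
  have hB : ‖(1 - z) ^ ((α : ℂ) - 1)‖ = s := by
    rw [← ofReal_one, ← ofReal_sub, norm_cpow_real, ofReal_one]
  have hnum : ‖(1 - z) ^ (α : ℂ) + α * z * (1 - z) ^ ((α : ℂ) - 1)‖ ≤ r ^ α + α * s :=
    calc _ ≤ ‖(1 - z) ^ (α : ℂ)‖ + α * ‖z‖ * ‖(1 - z) ^ ((α : ℂ) - 1)‖ := by
          refine (norm_add_le _ _).trans_eq ?_
          rw [norm_mul, norm_mul, norm_real, Real.norm_of_nonneg hα]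
      _ ≤ r ^ α + α * s := by
          rw [hA, hB]; gcongr; exact mul_le_of_le_one_right hα hz.le
  rw [(hasDerivAt_div_one_sub_cpow _ hz).deriv, norm_div, norm_pow, hA]
  calc _ ≤ (r ^ α + α * s) / (r ^ α) ^ 2 := by gcongr
    _ = (r + α) / r ^ (α + 1) := by rw [hrα, hrα1]; field_simp

theorem one_sub_norm_sq_rpow_mul_norm_deriv_div_one_sub_cpow_le {α : ℝ} (hα : 0 ≤ α) {z : ℂ}
    (hz : ‖z‖ < 1) :
    (1 - ‖z‖ ^ 2) ^ (α + 1) * ‖deriv (fun w : ℂ => w / (1 - w) ^ (α : ℂ)) z‖ ≤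
      2 ^ (α + 1) * (2 + α) := by
  set r := ‖1 - z‖
  have hr : 0 < r := norm_pos_iff.2 (sub_ne_zero.2 fun h => by simp [← h] at hz)
  have hr_ge : 1 - ‖z‖ ≤ r := by simpa using norm_sub_norm_le 1 z
  have hr_le : r ≤ 2 := by linarith [norm_sub_le (1 : ℂ) z, norm_one (α := ℂ)]
  have hweight : (1 - ‖z‖ ^ 2) ^ (α + 1) ≤ 2 ^ (α + 1) * r ^ (α + 1) := by
    rw [← Real.mul_rpow zero_le_two hr.le]
    gcongr
    · nlinarith [norm_nonneg z]
    · nlinarith [norm_nonneg z]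
  calc _ ≤ 2 ^ (α + 1) * r ^ (α + 1) * ((r + α) / r ^ (α + 1)) :=
        mul_le_mul hweight (norm_deriv_div_one_sub_cpow_le hα hz) (norm_nonneg _) (by positivity)
    _ = 2 ^ (α + 1) * (r + α) := by field_simp
    _ ≤ 2 ^ (α + 1) * (2 + α) := by gcongr

/-- Example 2.8: f(z) = z/(1-z)^α lies in B_{α+1}^0, but for β > 1 the quantity
(1+t)^(α+1)/(1-t)^(β-1) is unbounded over t ∈ (0,1); hence the β-Cesàro operator
is unbounded on B_{α+1}^0 for β > 1. -/
theorem stmt_11 (α β : ℝ) (hα : 0 < α) (hβ : 1 < β) :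
    DifferentiableOn ℂ (fun z : ℂ => z / (1 - z) ^ (α : ℂ)) (Metric.ball (0:ℂ) 1) ∧
    (fun z : ℂ => z / (1 - z) ^ (α : ℂ)) 0 = 0 ∧
    BddAbove {c : ℝ | ∃ z ∈ Metric.ball (0:ℂ) 1,
      c = (1 - ‖z‖ ^ 2) ^ (α + 1) * ‖deriv (fun w : ℂ => w / (1 - w) ^ (α : ℂ)) z‖} ∧
    ¬ BddAbove {c : ℝ | ∃ t ∈ Set.Ioo (0:ℝ) 1,
      c = (1 + t) ^ (α + 1) / (1 - t) ^ (β - 1)} := by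
  refine ⟨fun z hz => ?_, by simp, ⟨2 ^ (α + 1) * (2 + α), ?_⟩,
    not_bddAbove_one_add_rpow_div_one_sub_rpow (α + 1) (sub_pos.2 hβ)⟩
  · exact (hasDerivAt_div_one_sub_cpow _ (mem_ball_zero_iff.1 hz)).differentiableAt
      |>.differentiableWithinAt
  · rintro _ ⟨z, hz, rfl⟩
    exact one_sub_norm_sq_rpow_mul_norm_deriv_div_one_sub_cpow_le hα.le (mem_ball_zero_iff.1 hz)
end

section
/- Let α ≥ 1 and let g(w) = Σ_{j=1}^k a_j/(1-b_j w) + h(w), where the b_j are distinct points on the unit circle, a_j ≠ 0, and h is bounded analytic on D, and suppose Re(a_j/g(0)) ≤ 0 for all j and g(0) ≠ 0. Then for each n ∈ ℕ, the number g(0)/n is an eigenvalue of the generalized Cesàro operator C_g(f)(z) = ∫_0^z f(w)g(w)/w dw on B_α^0, with eigenfunction f(z) = z^n ψ_n(z) where ψ_n(z) = exp( (n/g(0)) ∫_0^z (g(w)-g(0))/w dw ). Moreover, any eigenvalue of C_g on B_α^0 is of the form g(0)/n for some n ∈ ℕ. -/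
/-!
Write `g w = g 0 + w * D w` with `D = dslope h 0 + ∑ j, a j * b j / (1 - b j * w)`. The phase
`Φ = H - ∑ j, a j * log (1 - b j * w)` is a primitive of `D`, where `H` is a primitive of
`dslope h 0`, bounded because `dslope h 0` is bounded by the Schwarz lemma. For `c = n / g 0` the
function `ε = z ^ n * exp (c * Φ)` satisfies `ε' = c * z ^ (n - 1) * exp (c * Φ) * g`, so
`C_g ε = ε / c`. Because `Re (c * a j) ≤ 0`, `Re (c * Φ)` is bounded above
(`log ‖1 - b j * z‖ ≤ log 2`, `|arg| ≤ π`), hence `‖ε'‖ ≲ ‖g‖ ≲ 1 / (1 - ‖z‖)` and `ε ∈ B_α^0`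
for `α ≥ 1`.

Conversely, `λ f = C_g f` means `λ z f' = f g`; writing `f = z ^ N * u` with `u 0 ≠ 0`, dividing
by `z ^ N` and letting `z → 0` gives `λ N = g 0`.
-/

open Metric Set Filter Topology

section UnitCircle

variable {b z : ℂ}

lemma one_sub_norm_le_norm_one_sub_mul (hb : ‖b‖ = 1) (z : ℂ) : 1 - ‖z‖ ≤ ‖1 - b * z‖ := by
  simpa [norm_mul, hb] using norm_sub_norm_le (1 : ℂ) (b * z)

lemma norm_one_sub_mul_le (hb : ‖b‖ = 1) (z : ℂ) : ‖1 - b * z‖ ≤ 1 + ‖z‖ := by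
  simpa [norm_mul, hb] using norm_sub_le (1 : ℂ) (b * z)

lemma one_sub_mul_ne_zero (hb : ‖b‖ = 1) (hz : ‖z‖ < 1) : 1 - b * z ≠ 0 :=
  norm_pos_iff.1 <| by linarith [one_sub_norm_le_norm_one_sub_mul hb z]

lemma one_sub_mul_mem_slitPlane (hb : ‖b‖ = 1) (hz : ‖z‖ < 1) :
    1 - b * z ∈ Complex.slitPlane := by
  simpa [sub_eq_add_neg] using
    Complex.mem_slitPlane_of_norm_lt_one (z := -(b * z)) (by simpa [norm_mul, hb])

end UnitCircle

lemma re_mul_log_ge {w u : ℂ} {R : ℝ} (hw : w.re ≤ 0) (hu : u ≠ 0) (huR : ‖u‖ ≤ R) :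
    w.re * Real.log R - ‖w‖ * Real.pi ≤ (w * Complex.log u).re := by
  have hre : w.re * Real.log R ≤ w.re * Real.log ‖u‖ :=
    mul_le_mul_of_nonpos_left (Real.log_le_log (norm_pos_iff.2 hu) huR) hw
  have him : w.im * u.arg ≤ ‖w‖ * Real.pi :=
    calc w.im * u.arg ≤ |w.im| * |u.arg| := by rw [← abs_mul]; exact le_abs_self _
      _ ≤ ‖w‖ * Real.pi := by
        gcongr
        exacts [Complex.abs_im_le_norm w, Complex.abs_arg_le_pi u]
  rw [Complex.mul_re, Complex.log_re, Complex.log_im]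
  linarith

lemma exists_primitive_dslope_norm_le {h : ℂ → ℂ} {c : ℂ} {R C : ℝ} (hR : 0 < R)
    (hh : DifferentiableOn ℂ h (ball c R)) (hC : ∀ z ∈ ball c R, ‖h z‖ ≤ C) :
    ∃ H : ℂ → ℂ, H c = 0 ∧ (∀ z ∈ ball c R, HasDerivAt H (dslope h c z) z) ∧
      ∀ z ∈ ball c R, ‖H z‖ ≤ 2 * C := by
  obtain ⟨H, hHc, hH⟩ :=
    ((Complex.differentiableOn_dslope (ball_mem_nhds c hR)).2 hh).isExactOn_ball.with_val_at c 0
  have hmaps : MapsTo h (ball c R) (closedBall (h c) (2 * C)) := fun z hz => by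
    rw [mem_closedBall, dist_eq_norm]
    linarith [norm_sub_le (h z) (h c), hC z hz, hC c (mem_ball_self hR)]
  refine ⟨H, hHc, hH, fun z hz => ?_⟩
  have hLip := (convex_ball c R).norm_image_sub_le_of_norm_hasDerivWithin_le
    (fun w hw => (hH w hw).hasDerivWithinAt)
    (fun w hw => Complex.norm_dslope_le_div_of_mapsTo_ball hh hmaps hw) (mem_ball_self hR) hz
  have hz' : ‖z - c‖ < R := mem_ball_iff_norm.1 hz
  have hC0 : 0 ≤ C := (norm_nonneg _).trans (hC c (mem_ball_self hR))
  calc ‖H z‖ = ‖H z - H c‖ := by rw [hHc, sub_zero]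
    _ ≤ 2 * C / R * ‖z - c‖ := hLip
    _ ≤ 2 * C / R * R := by gcongr
    _ = 2 * C := div_mul_cancel₀ _ hR.ne'

lemma eqOn_ball_of_deriv_eq_of_ne_center {E : Type*} [NormedAddCommGroup E] [NormedSpace ℂ E]
    [CompleteSpace E] {F G : ℂ → E} {c : ℂ} {r : ℝ}
    (hF : DifferentiableOn ℂ F (ball c r)) (hG : DifferentiableOn ℂ G (ball c r))
    (hd : ∀ z ∈ ball c r, z ≠ c → deriv F z = deriv G z) (hc : F c = G c) :
    EqOn F G (ball c r) := by
  rcases le_or_gt r 0 with hr | hr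
  · simp [ball_eq_empty.2 hr]
  have hcont : ∀ {Φ : ℂ → E}, DifferentiableOn ℂ Φ (ball c r) → ContinuousAt (deriv Φ) c :=
    fun hΦ => ((hΦ.analyticOnNhd isOpen_ball).deriv c (mem_ball_self hr)).continuousAt
  have hnear : deriv F =ᶠ[𝓝[≠] c] deriv G :=
    eventually_nhdsWithin_iff.2 <| mem_of_superset (ball_mem_nhds c hr) fun z hz hzc => hd z hz hzc
  have hdc : deriv F c = deriv G c :=
    tendsto_nhds_unique (((hcont hF).tendsto.mono_left nhdsWithin_le_nhds).congr' hnear)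
      ((hcont hG).tendsto.mono_left nhdsWithin_le_nhds)
  refine isOpen_ball.eqOn_of_deriv_eq (convex_ball c r).isPreconnected hF hG (fun z hz => ?_)
    (mem_ball_self hr) hc
  rcases eq_or_ne z c with rfl | hzc
  exacts [hdc, hd z hz hzc]

lemma rpow_one_sub_sq_le {r α : ℝ} (hα : 1 ≤ α) (hr0 : 0 ≤ r) (hr1 : r < 1) :
    (1 - r ^ 2) ^ α ≤ 2 * (1 - r) := by
  have hpos : 0 < 1 - r ^ 2 := by nlinarith
  calc (1 - r ^ 2) ^ α ≤ (1 - r ^ 2) ^ (1 : ℝ) :=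
        Real.rpow_le_rpow_of_exponent_ge hpos (by nlinarith) hα
    _ ≤ 2 * (1 - r) := by rw [Real.rpow_one]; nlinarith

lemma bddAbove_weighted_norm_of_le_div {E : Type*} [NormedAddCommGroup E] {φ : ℂ → E} {α A : ℝ}
    (hα : 1 ≤ α) (hφ : ∀ z ∈ ball (0 : ℂ) 1, ‖φ z‖ ≤ A / (1 - ‖z‖)) :
    BddAbove {c : ℝ | ∃ z ∈ ball (0 : ℂ) 1, c = (1 - ‖z‖ ^ 2) ^ α * ‖φ z‖} := by
  refine ⟨2 * A, ?_⟩
  rintro _ ⟨z, hz, rfl⟩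
  have hz1 : ‖z‖ < 1 := mem_ball_zero_iff.1 hz
  have hpos : 0 < 1 - ‖z‖ := by linarith
  calc (1 - ‖z‖ ^ 2) ^ α * ‖φ z‖ ≤ 2 * (1 - ‖z‖) * (A / (1 - ‖z‖)) :=
        mul_le_mul (rpow_one_sub_sq_le hα (norm_nonneg z) hz1) (hφ z hz) (norm_nonneg _)
          (by positivity)
    _ = 2 * A := by field_simp

section PoleSum

variable {k : ℕ} {a b : Fin k → ℂ} {z : ℂ}

lemma sum_div_one_sub_mul_eq (hb : ∀ j, ‖b j‖ = 1) (hz : ‖z‖ < 1) :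
    ∑ j, a j / (1 - b j * z) = ∑ j, a j + z * ∑ j, a j * b j / (1 - b j * z) := by
  rw [Finset.mul_sum, ← Finset.sum_add_distrib]
  refine Finset.sum_congr rfl fun j _ => ?_
  have := one_sub_mul_ne_zero (hb j) hz
  field_simp
  ring

lemma norm_sum_div_one_sub_mul_le (hb : ∀ j, ‖b j‖ = 1) (hz : ‖z‖ < 1) :
    ‖∑ j, a j / (1 - b j * z)‖ ≤ (∑ j, ‖a j‖) / (1 - ‖z‖) := by
  rw [Finset.sum_div]
  refine (norm_sum_le _ _).trans (Finset.sum_le_sum fun j _ => ?_)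
  rw [norm_div]
  exact div_le_div_of_nonneg_left (norm_nonneg _) (by linarith)
    (one_sub_norm_le_norm_one_sub_mul (hb j) z)

lemma hasDerivAt_sum_mul_log_one_sub_mul (hb : ∀ j, ‖b j‖ = 1) (hz : ‖z‖ < 1) :
    HasDerivAt (fun w => ∑ j, a j * Complex.log (1 - b j * w))
      (-∑ j, a j * b j / (1 - b j * z)) z := by
  rw [← Finset.sum_neg_distrib]
  refine HasDerivAt.fun_sum fun j _ => ?_
  have hlin : HasDerivAt (fun w => 1 - b j * w) (-b j) z := by
    simpa using ((hasDerivAt_id z).const_mul (b j)).const_sub 1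
  exact ((hlin.clog (one_sub_mul_mem_slitPlane (hb j) hz)).const_mul (a j)).congr_deriv (by ring)

lemma neg_re_mul_sum_mul_log_le {c : ℂ} (hb : ∀ j, ‖b j‖ = 1) (hca : ∀ j, (c * a j).re ≤ 0)
    (hz : ‖z‖ < 1) :
    -(c * ∑ j, a j * Complex.log (1 - b j * z)).re ≤
      ∑ j, (‖c * a j‖ * Real.pi - (c * a j).re * Real.log 2) := by
  rw [Finset.mul_sum, Complex.re_sum, ← Finset.sum_neg_distrib]
  refine Finset.sum_le_sum fun j _ => ?_
  have := re_mul_log_ge (R := 2) (hca j) (one_sub_mul_ne_zero (hb j) hz)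
    ((norm_one_sub_mul_le (hb j) z).trans (by linarith))
  rw [← mul_assoc]
  linarith

end PoleSum

section Phase

variable {k : ℕ} {a b : Fin k → ℂ} {h g : ℂ → ℂ} {C : ℝ}

lemma norm_le_div_one_sub_norm_of_eq_sum_div_add (hb : ∀ j, ‖b j‖ = 1)
    (hC : ∀ z ∈ ball (0 : ℂ) 1, ‖h z‖ ≤ C)
    (hg : ∀ w ∈ ball (0 : ℂ) 1, g w = ∑ j, a j / (1 - b j * w) + h w) {z : ℂ}
    (hz : z ∈ ball (0 : ℂ) 1) :
    ‖g z‖ ≤ (∑ j, ‖a j‖ + C) / (1 - ‖z‖) := by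
  have hz1 : ‖z‖ < 1 := mem_ball_zero_iff.1 hz
  have hC' : C ≤ C / (1 - ‖z‖) :=
    le_div_self ((norm_nonneg _).trans (hC z hz)) (by linarith) (by linarith [norm_nonneg z])
  rw [hg z hz, add_div]
  exact (norm_add_le _ _).trans
    (add_le_add (norm_sum_div_one_sub_mul_le hb hz1) ((hC z hz).trans hC'))

lemma differentiableOn_of_eq_sum_div_add (hb : ∀ j, ‖b j‖ = 1)
    (hh : DifferentiableOn ℂ h (ball 0 1))
    (hg : ∀ w ∈ ball (0 : ℂ) 1, g w = ∑ j, a j / (1 - b j * w) + h w) :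
    DifferentiableOn ℂ g (ball 0 1) := by
  refine (DifferentiableOn.add (DifferentiableOn.fun_sum fun j _ => ?_) hh).congr hg
  exact (differentiableOn_const _).div (by fun_prop)
    fun z hz => one_sub_mul_ne_zero (hb j) (mem_ball_zero_iff.1 hz)

theorem exists_phase_of_eq_sum_div_add (hb : ∀ j, ‖b j‖ = 1) (hh : DifferentiableOn ℂ h (ball 0 1))
    (hC : ∀ z ∈ ball (0 : ℂ) 1, ‖h z‖ ≤ C)
    (hg : ∀ w ∈ ball (0 : ℂ) 1, g w = ∑ j, a j / (1 - b j * w) + h w) :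
    ∃ Φ D : ℂ → ℂ, Φ 0 = 0 ∧
      (∀ z ∈ ball (0 : ℂ) 1, HasDerivAt Φ (D z) z ∧ g z = g 0 + z * D z) ∧
      ∀ c : ℂ, (∀ j, (c * a j).re ≤ 0) →
        ∃ K, ∀ z ∈ ball (0 : ℂ) 1, ‖Complex.exp (c * Φ z)‖ ≤ K := by
  obtain ⟨H, hH0, hH, hHC⟩ := exists_primitive_dslope_norm_le one_pos hh hC
  refine ⟨fun z => H z - ∑ j, a j * Complex.log (1 - b j * z),
    fun z => dslope h 0 z + ∑ j, a j * b j / (1 - b j * z), by simp [hH0],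
    fun z hz => ⟨?_, ?_⟩, fun c hc => ⟨Real.exp (‖c‖ * (2 * C) +
      ∑ j, (‖c * a j‖ * Real.pi - (c * a j).re * Real.log 2)), fun z hz => ?_⟩⟩
  · exact ((hH z hz).sub (hasDerivAt_sum_mul_log_one_sub_mul hb (mem_ball_zero_iff.1 hz)))
      |>.congr_deriv (by ring)
  · have hdslope : z * dslope h 0 z = h z - h 0 := by simpa using sub_smul_dslope h 0 z
    rw [hg z hz, hg 0 (mem_ball_self one_pos), sum_div_one_sub_mul_eq hb (mem_ball_zero_iff.1 hz)]
    simp only [mul_zero, sub_zero, div_one]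
    linear_combination -hdslope
  · have hHre : (c * H z).re ≤ ‖c‖ * (2 * C) :=
      (Complex.re_le_norm _).trans (by rw [norm_mul]; gcongr; exact hHC z hz)
    have hL := neg_re_mul_sum_mul_log_le hb hc (mem_ball_zero_iff.1 hz)
    rw [Complex.norm_exp, Real.exp_le_exp, mul_sub, Complex.sub_re]
    linarith

end Phase

lemma hasDerivAt_pow_succ_mul_exp {Φ : ℂ → ℂ} {c d γ z : ℂ} {m : ℕ} (hΦ : HasDerivAt Φ d z)
    (hc : c * γ = m + 1) :
    HasDerivAt (fun w => w ^ (m + 1) * Complex.exp (c * Φ w))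
      (c * z ^ m * Complex.exp (c * Φ z) * (γ + z * d)) z := by
  refine ((hasDerivAt_pow (m + 1) z).mul (hΦ.const_mul c).cexp).congr_deriv ?_
  simp only [Nat.add_sub_cancel, Nat.cast_add, Nat.cast_one]
  linear_combination (-(z ^ m * Complex.exp (c * Φ z))) * hc

section Eigenfunction

variable {Φ D g : ℂ → ℂ} {c : ℂ} {m : ℕ}

lemma deriv_exp_mul_eq_of_phase
    (hΦ : ∀ z ∈ ball (0 : ℂ) 1, HasDerivAt Φ (D z) z ∧ g z = g 0 + z * D z) {z : ℂ}
    (hz : z ∈ ball (0 : ℂ) 1) (hz0 : z ≠ 0) :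
    deriv (fun w => Complex.exp (c * Φ w)) z = c * ((g z - g 0) / z) * Complex.exp (c * Φ z) := by
  rw [((hΦ z hz).1.const_mul c).cexp.deriv, (hΦ z hz).2, add_sub_cancel_left,
    mul_div_cancel_left₀ _ hz0]
  ring

lemma hasDerivAt_pow_succ_mul_exp_of_phase
    (hΦ : ∀ z ∈ ball (0 : ℂ) 1, HasDerivAt Φ (D z) z ∧ g z = g 0 + z * D z)
    (hc : c * g 0 = m + 1) {z : ℂ} (hz : z ∈ ball (0 : ℂ) 1) :
    HasDerivAt (fun w => w ^ (m + 1) * Complex.exp (c * Φ w))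
      (c * z ^ m * Complex.exp (c * Φ z) * g z) z := by
  simpa only [← (hΦ z hz).2] using hasDerivAt_pow_succ_mul_exp (hΦ z hz).1 hc

lemma bddAbove_weighted_norm_deriv_pow_succ_mul_exp {α A K : ℝ} (hα : 1 ≤ α)
    (hΦ : ∀ z ∈ ball (0 : ℂ) 1, HasDerivAt Φ (D z) z ∧ g z = g 0 + z * D z)
    (hc : c * g 0 = m + 1) (hK : ∀ z ∈ ball (0 : ℂ) 1, ‖Complex.exp (c * Φ z)‖ ≤ K)
    (hg : ∀ z ∈ ball (0 : ℂ) 1, ‖g z‖ ≤ A / (1 - ‖z‖)) :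
    BddAbove {r : ℝ | ∃ z ∈ ball (0 : ℂ) 1,
      r = (1 - ‖z‖ ^ 2) ^ α * ‖deriv (fun w => w ^ (m + 1) * Complex.exp (c * Φ w)) z‖} := by
  have hK0 : 0 ≤ K := (norm_nonneg _).trans (hK 0 (mem_ball_self one_pos))
  refine bddAbove_weighted_norm_of_le_div hα (A := ‖c‖ * K * A) fun z hz => ?_
  rw [(hasDerivAt_pow_succ_mul_exp_of_phase hΦ hc hz).deriv, mul_div_assoc, norm_mul, norm_mul,
    norm_mul, norm_pow]
  calc ‖c‖ * ‖z‖ ^ m * ‖Complex.exp (c * Φ z)‖ * ‖g z‖ ≤ ‖c‖ * 1 * K * (A / (1 - ‖z‖)) := by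
        gcongr
        exacts [pow_le_one₀ (norm_nonneg z) (mem_ball_zero_iff.1 hz).le, hK z hz, hg z hz]
    _ = ‖c‖ * K * (A / (1 - ‖z‖)) := by ring

lemma eqOn_inv_mul_pow_succ_mul_exp_of_deriv_eq
    (hΦ : ∀ z ∈ ball (0 : ℂ) 1, HasDerivAt Φ (D z) z ∧ g z = g 0 + z * D z)
    (hc : c * g 0 = m + 1) {F : ℂ → ℂ} (hF0 : F 0 = 0) (hF : DifferentiableOn ℂ F (ball 0 1))
    (hFd : ∀ z ∈ ball (0 : ℂ) 1, z ≠ 0 →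
      deriv F z = z ^ (m + 1) * Complex.exp (c * Φ z) * g z / z) :
    EqOn F (fun z => c⁻¹ * (z ^ (m + 1) * Complex.exp (c * Φ z))) (ball 0 1) := by
  have hc0 : c ≠ 0 := fun h => Nat.cast_add_one_ne_zero (R := ℂ) m (by simpa [h] using hc.symm)
  have hε := fun z (hz : z ∈ ball (0 : ℂ) 1) =>
    (hasDerivAt_pow_succ_mul_exp_of_phase hΦ hc hz).const_mul c⁻¹
  refine eqOn_ball_of_deriv_eq_of_ne_center hF
    (fun z hz => (hε z hz).differentiableAt.differentiableWithinAt) (fun z hz hz0 => ?_)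
    (by simp [hF0])
  rw [hFd z hz hz0, (hε z hz).deriv]
  field_simp
  ring

end Eigenfunction

lemma exists_pos_nat_mul_eq_of_mul_deriv_eq {f g : ℂ → ℂ} {lam : ℂ} (hf : AnalyticAt ℂ f 0)
    (hf0 : f 0 = 0) (hord : analyticOrderAt f 0 ≠ ⊤) (hg : ContinuousAt g 0)
    (heq : ∀ᶠ z in 𝓝[≠] 0, lam * (z * deriv f z) = f z * g z) :
    ∃ N : ℕ, 0 < N ∧ lam * N = g 0 := by
  obtain ⟨u, hu, hu0, hfu⟩ := hf.analyticOrderAt_ne_top.1 hord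
  set N := analyticOrderNatAt f 0
  have hN : N ≠ 0 := fun hN => hu0 <| by simpa [hN, hf0] using hfu.self_of_nhds.symm
  obtain ⟨M, hM⟩ := Nat.exists_eq_add_one_of_ne_zero hN
  have hderiv : ∀ᶠ z in 𝓝 0, z * deriv f z = z ^ N * (N * u z + z * deriv u z) := by
    filter_upwards [hfu.deriv, hu.eventually_analyticAt] with z hfz huz
    simp only [sub_zero, smul_eq_mul] at hfz
    rw [hfz, ((hasDerivAt_pow N z).fun_mul huz.differentiableAt.hasDerivAt).deriv, hM]
    simp only [Nat.add_sub_cancel, Nat.cast_add, Nat.cast_one]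
    ring
  have hcancel : ∀ᶠ z in 𝓝[≠] 0, lam * (N * u z + z * deriv u z) = u z * g z := by
    filter_upwards [heq, nhdsWithin_le_nhds hderiv, nhdsWithin_le_nhds hfu, self_mem_nhdsWithin]
      with z hzeq hzd hzf hz0
    simp only [sub_zero, smul_eq_mul] at hzf
    apply mul_left_cancel₀ (pow_ne_zero N hz0)
    linear_combination hzeq - lam * hzd + g z * hzf
  have hu_cont := hu.continuousAt
  have hu'_cont := hu.deriv.continuousAt
  have hlim : lam * (N * u 0 + 0 * deriv u 0) = u 0 * g 0 := tendsto_nhds_unique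
    ((ContinuousAt.tendsto (by fun_prop)).mono_left nhdsWithin_le_nhds |>.congr' hcancel)
    ((ContinuousAt.tendsto (by fun_prop)).mono_left nhdsWithin_le_nhds)
  refine ⟨N, Nat.pos_of_ne_zero hN, mul_left_cancel₀ hu0 ?_⟩
  linear_combination hlim

lemma exists_pos_nat_eq_div_of_eigenfunction {U : Set ℂ} {f F g : ℂ → ℂ} {lam : ℂ} (hU : IsOpen U)
    (hUc : IsPreconnected U) (h0 : 0 ∈ U) (hf : DifferentiableOn ℂ f U) (hf0 : f 0 = 0)
    (hfne : ∃ z ∈ U, f z ≠ 0) (hg : ContinuousAt g 0)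
    (hF : ∀ z ∈ U, z ≠ 0 → deriv F z = f z * g z / z) (hlam : ∀ z ∈ U, lam * f z = F z) :
    ∃ n : ℕ, 0 < n ∧ lam = g 0 / n := by
  have hfa := hf.analyticOnNhd hU
  obtain ⟨z₀, hz₀, hfz₀⟩ := hfne
  have hord : analyticOrderAt f 0 ≠ ⊤ :=
    hfa.analyticOrderAt_ne_top_of_isPreconnected hUc hz₀ h0
      (by simp [analyticOrderAt_eq_zero.2 (Or.inr hfz₀)])
  have heq : ∀ᶠ z in 𝓝[≠] 0, lam * (z * deriv f z) = f z * g z := by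
    filter_upwards [nhdsWithin_le_nhds (hU.mem_nhds h0), self_mem_nhdsWithin] with z hz hz0
    have hFz : deriv F z = lam * deriv f z := by
      rw [← (eventuallyEq_of_mem (hU.mem_nhds hz) hlam).deriv_eq]
      exact deriv_const_mul lam (hf.differentiableAt (hU.mem_nhds hz))
    have := hF z hz hz0
    rw [hFz, eq_div_iff hz0] at this
    linear_combination this
  obtain ⟨N, hN, hlamN⟩ := exists_pos_nat_mul_eq_of_mul_deriv_eq (hfa 0 h0) hf0 hord hg heq
  exact ⟨N, hN, eq_div_of_mul_eq (Nat.cast_ne_zero.2 hN.ne') hlamN⟩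

theorem stmt_16_general (α : ℝ) (hα : 1 ≤ α) (k : ℕ)
    (a b : Fin k → ℂ) (hb : ∀ j, ‖b j‖ = 1)
    (h : ℂ → ℂ) (hh : DifferentiableOn ℂ h (Metric.ball (0:ℂ) 1))
    (hhb : ∃ C : ℝ, ∀ z ∈ Metric.ball (0:ℂ) 1, ‖h z‖ ≤ C)
    (g : ℂ → ℂ) (hg : ∀ w ∈ Metric.ball (0:ℂ) 1,
      g w = ∑ j, a j / (1 - b j * w) + h w)
    (hg0 : g 0 ≠ 0) (hre : ∀ j, (a j / g 0).re ≤ 0) :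
    (∀ n : ℕ, 0 < n → ∃ ψ : ℂ → ℂ,
      DifferentiableOn ℂ ψ (Metric.ball (0:ℂ) 1) ∧ ψ 0 = 1 ∧
      (∀ z ∈ Metric.ball (0:ℂ) 1, z ≠ 0 →
        deriv ψ z = (n / g 0) * ((g z - g 0) / z) * ψ z) ∧
      DifferentiableOn ℂ (fun z : ℂ => z ^ n * ψ z) (Metric.ball (0:ℂ) 1) ∧
      BddAbove {c : ℝ | ∃ z ∈ Metric.ball (0:ℂ) 1,
        c = (1 - ‖z‖ ^ 2) ^ α * ‖deriv (fun w : ℂ => w ^ n * ψ w) z‖} ∧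
      (∃ z ∈ Metric.ball (0:ℂ) 1, z ^ n * ψ z ≠ 0) ∧
      (∀ F : ℂ → ℂ, F 0 = 0 → DifferentiableOn ℂ F (Metric.ball (0:ℂ) 1) →
        (∀ z ∈ Metric.ball (0:ℂ) 1, z ≠ 0 →
          deriv F z = (z ^ n * ψ z) * g z / z) →
        ∀ z ∈ Metric.ball (0:ℂ) 1, F z = (g 0 / n) * (z ^ n * ψ z))) ∧
    (∀ (lam : ℂ) (f F : ℂ → ℂ),
      DifferentiableOn ℂ f (Metric.ball (0:ℂ) 1) → f 0 = 0 →
      BddAbove {c : ℝ | ∃ z ∈ Metric.ball (0:ℂ) 1,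
        c = (1 - ‖z‖ ^ 2) ^ α * ‖deriv f z‖} →
      (∃ z ∈ Metric.ball (0:ℂ) 1, f z ≠ 0) →
      F 0 = 0 → DifferentiableOn ℂ F (Metric.ball (0:ℂ) 1) →
      (∀ z ∈ Metric.ball (0:ℂ) 1, z ≠ 0 → deriv F z = f z * g z / z) →
      (∀ z ∈ Metric.ball (0:ℂ) 1, lam * f z = F z) →
      ∃ n : ℕ, 0 < n ∧ lam = g 0 / n) := by
  obtain ⟨C, hC⟩ := hhb
  have hg_cont : ContinuousAt g 0 :=
    ((differentiableOn_of_eq_sum_div_add hb hh hg).differentiableAt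
      (ball_mem_nhds 0 one_pos)).continuousAt
  obtain ⟨Φ, D, hΦ0, hΦ, hexp⟩ := exists_phase_of_eq_sum_div_add hb hh hC hg
  refine ⟨fun n hn => ?_, fun lam f F hf hf0 _ hfne _ _ hF hlam =>
    exists_pos_nat_eq_div_of_eigenfunction isOpen_ball (convex_ball 0 1).isPreconnected
      (mem_ball_self one_pos) hf hf0 hfne hg_cont hF hlam⟩
  obtain ⟨m, rfl⟩ := Nat.exists_eq_add_one_of_ne_zero hn.ne'
  set c : ℂ := ((m + 1 : ℕ) : ℂ) / g 0
  have hc : c * g 0 = m + 1 := by simp [c, div_mul_cancel₀ _ hg0]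
  obtain ⟨K, hK⟩ := hexp c fun j => by
    simpa [c, div_mul_eq_mul_div, mul_div_assoc] using
      mul_nonpos_of_nonneg_of_nonpos (Nat.cast_nonneg (m + 1)) (hre j)
  refine ⟨fun z => Complex.exp (c * Φ z),
    fun z hz => ((hΦ z hz).1.const_mul c).cexp.differentiableAt.differentiableWithinAt,
    by simp [hΦ0], fun z hz hz0 => deriv_exp_mul_eq_of_phase hΦ hz hz0,
    fun z hz =>
      (hasDerivAt_pow_succ_mul_exp_of_phase hΦ hc hz).differentiableAt.differentiableWithinAt,
    bddAbove_weighted_norm_deriv_pow_succ_mul_exp hα hΦ hc hK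
      fun z hz => norm_le_div_one_sub_norm_of_eq_sum_div_add hb hC hg hz,
    ⟨1 / 2, by norm_num, by simp⟩, fun F hF0 hF hFd z hz => ?_⟩
  simpa only [c, inv_div] using eqOn_inv_mul_pow_succ_mul_exp_of_deriv_eq hΦ hc hF0 hF hFd hz

/-- Theorem 5.1: point spectrum of the generalized Cesàro operator
C_g(f)(z) = ∫_0^z f(w)g(w)/w dw on B_α^0, α ≥ 1, where
g(w) = Σ_j a_j/(1-b_j w) + h(w) with |b_j| = 1 distinct, a_j ≠ 0, h bounded analytic,
g(0) ≠ 0 and Re(a_j/g(0)) ≤ 0: the eigenvalues are exactly g(0)/n, n ∈ ℕ,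
with eigenfunction z^n ψ_n(z), ψ_n = exp((n/g(0)) ∫_0^z (g(w)-g(0))/w dw).
The operator C_g(f) is encoded as the unique F with F(0)=0, F analytic,
F'(z) = f(z)g(z)/z on the punctured disk. -/
theorem stmt_16 (α : ℝ) (hα : 1 ≤ α) (k : ℕ) (hk : 0 < k)
    (a b : Fin k → ℂ) (hb : ∀ j, ‖b j‖ = 1) (hbinj : Function.Injective b)
    (ha : ∀ j, a j ≠ 0)
    (h : ℂ → ℂ) (hh : DifferentiableOn ℂ h (Metric.ball (0:ℂ) 1))
    (hhb : ∃ C : ℝ, ∀ z ∈ Metric.ball (0:ℂ) 1, ‖h z‖ ≤ C)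
    (g : ℂ → ℂ) (hg : ∀ w ∈ Metric.ball (0:ℂ) 1,
      g w = ∑ j, a j / (1 - b j * w) + h w)
    (hg0 : g 0 ≠ 0) (hre : ∀ j, (a j / g 0).re ≤ 0) :
    (∀ n : ℕ, 0 < n → ∃ ψ : ℂ → ℂ,
      DifferentiableOn ℂ ψ (Metric.ball (0:ℂ) 1) ∧ ψ 0 = 1 ∧
      (∀ z ∈ Metric.ball (0:ℂ) 1, z ≠ 0 →
        deriv ψ z = (n / g 0) * ((g z - g 0) / z) * ψ z) ∧
      DifferentiableOn ℂ (fun z : ℂ => z ^ n * ψ z) (Metric.ball (0:ℂ) 1) ∧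
      BddAbove {c : ℝ | ∃ z ∈ Metric.ball (0:ℂ) 1,
        c = (1 - ‖z‖ ^ 2) ^ α * ‖deriv (fun w : ℂ => w ^ n * ψ w) z‖} ∧
      (∃ z ∈ Metric.ball (0:ℂ) 1, z ^ n * ψ z ≠ 0) ∧
      (∀ F : ℂ → ℂ, F 0 = 0 → DifferentiableOn ℂ F (Metric.ball (0:ℂ) 1) →
        (∀ z ∈ Metric.ball (0:ℂ) 1, z ≠ 0 →
          deriv F z = (z ^ n * ψ z) * g z / z) →
        ∀ z ∈ Metric.ball (0:ℂ) 1, F z = (g 0 / n) * (z ^ n * ψ z))) ∧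
    (∀ (lam : ℂ) (f F : ℂ → ℂ),
      DifferentiableOn ℂ f (Metric.ball (0:ℂ) 1) → f 0 = 0 →
      BddAbove {c : ℝ | ∃ z ∈ Metric.ball (0:ℂ) 1,
        c = (1 - ‖z‖ ^ 2) ^ α * ‖deriv f z‖} →
      (∃ z ∈ Metric.ball (0:ℂ) 1, f z ≠ 0) →
      F 0 = 0 → DifferentiableOn ℂ F (Metric.ball (0:ℂ) 1) →
      (∀ z ∈ Metric.ball (0:ℂ) 1, z ≠ 0 → deriv F z = f z * g z / z) →
      (∀ z ∈ Metric.ball (0:ℂ) 1, lam * f z = F z) →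
      ∃ n : ℕ, 0 < n ∧ lam = g 0 / n) :=
  stmt_16_general α hα k a b hb h hh hhb g hg hg0 hre
end

section
/- Let α > 0 and let g be a bounded analytic function on the unit disk with g(0) possibly zero. If λ is an eigenvalue of the generalized Alexander operator C_g(f)(z) = ∫_0^z f(w)g(w)/w dw acting on analytic functions f on D vanishing at 0 (with f not identically zero), then λ = g(0)/n for some positive integer n, where n is the order of vanishing of f at 0. -/
/-!
Off the origin, differentiating `λ f = C_g f` and dividing by `z ^ n` gives
`λ (n ψ(z) + z ψ'(z)) = ψ(z) g(z)`. Both sides are continuous at `0` (`ψ` is analytic, so `ψ'`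
is continuous), hence the identity persists at `z = 0`, where it reads `λ n ψ(0) = ψ(0) g(0)`;
since `ψ(0) ≠ 0`, `λ = g(0) / n`.
-/

open Filter Topology

section

variable {𝕜 : Type*} [NontriviallyNormedField 𝕜]

/-- Stated after multiplying by `z` so that it also holds for `n = 0`. -/
theorem mul_deriv_pow_mul {ψ : 𝕜 → 𝕜} {z : 𝕜} (hψ : DifferentiableAt 𝕜 ψ z) (n : ℕ) :
    z * deriv (fun w => w ^ n * ψ w) z = z ^ n * (n * ψ z + z * deriv ψ z) := by
  rw [((hasDerivAt_pow n z).fun_mul hψ.hasDerivAt).deriv]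
  cases n with
  | zero => simp
  | succ n => simp only [Nat.add_sub_cancel, pow_succ]; push_cast; ring

theorem eigen_relation_of_ne_zero {ψ g F : 𝕜 → 𝕜} {lam z : 𝕜} {n : ℕ} (hz : z ≠ 0)
    (hψ : DifferentiableAt 𝕜 ψ z) (hF : (fun w => lam * (w ^ n * ψ w)) =ᶠ[𝓝 z] F)
    (hF' : deriv F z = z ^ n * ψ z * g z / z) :
    lam * (n * ψ z + z * deriv ψ z) = ψ z * g z := by
  have hderiv : z * (lam * deriv (fun w => w ^ n * ψ w) z) = z ^ n * ψ z * g z := by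
    rw [← deriv_const_mul_field, hF.deriv_eq, hF']
    field_simp
  rw [mul_left_comm, mul_deriv_pow_mul hψ] at hderiv
  apply mul_left_cancel₀ (pow_ne_zero n hz)
  linear_combination hderiv

end

theorem stmt_17_general (g : ℂ → ℂ)
    (hg : DifferentiableOn ℂ g (Metric.ball (0:ℂ) 1))
    (lam : ℂ) (n : ℕ) (hn : 1 ≤ n) (ψ : ℂ → ℂ)
    (hψ : DifferentiableOn ℂ ψ (Metric.ball (0:ℂ) 1)) (hψ0 : ψ 0 ≠ 0)
    (f : ℂ → ℂ) (hf : ∀ z, f z = z ^ n * ψ z)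
    (F : ℂ → ℂ)
    (hF' : ∀ z ∈ Metric.ball (0:ℂ) 1, z ≠ 0 → deriv F z = f z * g z / z)
    (heig : ∀ z ∈ Metric.ball (0:ℂ) 1, lam * f z = F z) :
    lam = g 0 / n := by
  have hball : Metric.ball (0:ℂ) 1 ∈ 𝓝 0 := Metric.ball_mem_nhds 0 one_pos
  have hψa : AnalyticOnNhd ℂ ψ (Metric.ball 0 1) := hψ.analyticOnNhd Metric.isOpen_ball
  have hψc : ContinuousAt ψ 0 := (hψa 0 (mem_of_mem_nhds hball)).continuousAt
  have hgc : ContinuousAt g 0 := (hg.differentiableAt hball).continuousAt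
  have hdψc : ContinuousAt (deriv ψ) 0 := (hψa.deriv 0 (mem_of_mem_nhds hball)).continuousAt
  have hoff : (fun z => lam * (n * ψ z + z * deriv ψ z)) =ᶠ[𝓝[≠] 0] fun z => ψ z * g z := by
    filter_upwards [self_mem_nhdsWithin, nhdsWithin_le_nhds hball] with z hz0 hz
    have hzU : Metric.ball (0:ℂ) 1 ∈ 𝓝 z := Metric.isOpen_ball.mem_nhds hz
    refine eigen_relation_of_ne_zero hz0 (hψ.differentiableAt hzU) ?_ (by rw [hF' z hz hz0, hf])
    filter_upwards [hzU] with w hw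
    rw [← heig w hw, hf]
  have hzero := ((ContinuousAt.eventuallyEq_nhds_iff_eventuallyEq_nhdsNE (by fun_prop)
    (hψc.fun_mul hgc)).1 hoff).eq_of_nhds
  have hn0 : (n : ℂ) ≠ 0 := Nat.cast_ne_zero.mpr (by omega)
  rw [eq_div_iff hn0]
  apply mul_right_cancel₀ hψ0
  linear_combination hzero

/-- If λ is an eigenvalue of the generalized Alexander operator
C_g(f)(z) = ∫_0^z f(w)g(w)/w dw (g bounded analytic) with eigenfunction
f(z) = z^n ψ(z), ψ(0) ≠ 0, n ≥ 1, then λ = g(0)/n. The operator value C_g(f) is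
encoded as a function F with F(0)=0, F analytic on the disk and
F'(z) = f(z)g(z)/z off the origin. -/
theorem stmt_17 (α : ℝ) (hα : 0 < α) (g : ℂ → ℂ)
    (hg : DifferentiableOn ℂ g (Metric.ball (0:ℂ) 1))
    (hgb : ∃ C : ℝ, ∀ z ∈ Metric.ball (0:ℂ) 1, ‖g z‖ ≤ C)
    (lam : ℂ) (n : ℕ) (hn : 1 ≤ n) (ψ : ℂ → ℂ)
    (hψ : DifferentiableOn ℂ ψ (Metric.ball (0:ℂ) 1)) (hψ0 : ψ 0 ≠ 0)
    (f : ℂ → ℂ) (hf : ∀ z, f z = z ^ n * ψ z)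
    (F : ℂ → ℂ) (hF0 : F 0 = 0)
    (hF : DifferentiableOn ℂ F (Metric.ball (0:ℂ) 1))
    (hF' : ∀ z ∈ Metric.ball (0:ℂ) 1, z ≠ 0 → deriv F z = f z * g z / z)
    (heig : ∀ z ∈ Metric.ball (0:ℂ) 1, lam * f z = F z) :
    lam = g 0 / n :=
  stmt_17_general g hg lam n hn ψ hψ hψ0 f hf F hF' heig
end

section
/- Let g be a bounded analytic function on the unit disk and α > 0. For the normalized functions h_n(z) = z^n/(n·‖z^n/n‖_{B_α}), one has ‖C_g(h_n)‖_{B_α} ≤ ‖g‖_∞ / n, which tends to 0 as n → ∞. Hence 0 is an approximate eigenvalue of C_g on B_α^0. -/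
open Filter Metric

/-!
Since `(z^n/n)' = z^(n-1)`, the normalizing constant is `S_n = sup_D (1-|w|²)^α |w|^(n-1)`, which
lies in `(0, 1]` because `α ≥ 0`; boundedness is what keeps the real `sSup` from its junk value `0`.
Then `(1-|z|²)^α |h_n(z) g(z) / z| = (1-|z|²)^α |z|^(n-1) |g(z)| / (n S_n) ≤ ‖g‖_∞ / n`, since the
weighted factor is at most `S_n`.
-/

lemma norm_deriv_pow_div_natCast {n : ℕ} (hn : n ≠ 0) (w : ℂ) :
    ‖deriv (fun u : ℂ => u ^ n / n) w‖ = ‖w‖ ^ (n - 1) := by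
  rw [deriv_div_const, deriv_pow_field, mul_div_cancel_left₀ _ (Nat.cast_ne_zero.mpr hn),
    norm_pow]

lemma le_sSup_setOf_exists_eq {X : Type*} {F : X → ℝ} {s : Set X} {M : ℝ}
    (hM : ∀ w ∈ s, F w ≤ M) {z : X} (hz : z ∈ s) :
    F z ≤ sSup {c : ℝ | ∃ w ∈ s, c = F w} :=
  le_csSup ⟨M, by rintro _ ⟨w, hw, rfl⟩; exact hM w hw⟩ ⟨z, hz, rfl⟩

section Weight

variable {α : ℝ} {w : ℂ}

lemma one_sub_norm_sq_pos (hw : w ∈ ball (0 : ℂ) 1) : 0 < 1 - ‖w‖ ^ 2 := by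
  rw [mem_ball_zero_iff] at hw
  nlinarith [norm_nonneg w]

lemma weight_mul_norm_pow_le_one (hα : 0 ≤ α) (n : ℕ) :
    ∀ w ∈ ball (0 : ℂ) 1, (1 - ‖w‖ ^ 2) ^ α * ‖w‖ ^ n ≤ 1 := by
  intro w hw
  have hweight : (1 - ‖w‖ ^ 2) ^ α ≤ 1 :=
    Real.rpow_le_one (one_sub_norm_sq_pos hw).le (by nlinarith [norm_nonneg w]) hα
  have hpow : ‖w‖ ^ n ≤ 1 := pow_le_one₀ (norm_nonneg w) (mem_ball_zero_iff.mp hw).le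
  simpa using mul_le_mul hweight hpow (by positivity) zero_le_one

lemma weight_mul_norm_pow_pos (n : ℕ) (hw : w ∈ ball (0 : ℂ) 1) (hw0 : w ≠ 0) :
    0 < (1 - ‖w‖ ^ 2) ^ α * ‖w‖ ^ n :=
  mul_pos (Real.rpow_pos_of_pos (one_sub_norm_sq_pos hw) α) (pow_pos (norm_pos_iff.mpr hw0) n)

end Weight

lemma mul_norm_pow_div_mul_div_le {a S C : ℝ} {n : ℕ} (hn : 1 ≤ n) {z w : ℂ} (hz0 : z ≠ 0)
    (hS : 0 < S) (hle : a * ‖z‖ ^ (n - 1) ≤ S) (hw : ‖w‖ ≤ C) :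
    a * ‖z ^ n / ((n : ℂ) * (S : ℂ)) * w / z‖ ≤ C / n := by
  have hnorm : ‖z ^ n / ((n : ℂ) * (S : ℂ)) * w / z‖ = ‖z‖ ^ (n - 1) * ‖w‖ / (n * S) := by
    rw [← Nat.sub_add_cancel hn, pow_succ, Nat.add_sub_cancel, norm_div, norm_mul, norm_div,
      norm_mul, norm_mul, norm_pow, Complex.norm_natCast, Complex.norm_real, Real.norm_eq_abs,
      abs_of_pos hS]
    field_simp
  calc a * ‖z ^ n / ((n : ℂ) * (S : ℂ)) * w / z‖
      = a * ‖z‖ ^ (n - 1) * ‖w‖ / (n * S) := by rw [hnorm]; ring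
    _ ≤ S * C / (n * S) := by gcongr
    _ = C / n := by field_simp

theorem stmt_18_general (α C : ℝ) (hα : 0 < α) (g : ℂ → ℂ)
    (hgb : ∀ z ∈ Metric.ball (0:ℂ) 1, ‖g z‖ ≤ C) :
    (∀ n : ℕ, 1 ≤ n → ∀ z ∈ Metric.ball (0:ℂ) 1, z ≠ 0 →
      (1 - ‖z‖ ^ 2) ^ α *
        ‖(z ^ n / (n * (sSup {c : ℝ | ∃ w ∈ Metric.ball (0:ℂ) 1,
            c = (1 - ‖w‖ ^ 2) ^ α * ‖deriv (fun u : ℂ => u ^ n / n) w‖} : ℝ))) *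
          g z / z‖ ≤ C / n) ∧
    Tendsto (fun n : ℕ => C / (n : ℝ)) atTop (nhds 0) := by
  refine ⟨fun n hn z hz hz0 => ?_, tendsto_const_div_atTop_nhds_zero_nat C⟩
  simp_rw [norm_deriv_pow_div_natCast (Nat.one_le_iff_ne_zero.mp hn)]
  have hbound := weight_mul_norm_pow_le_one hα.le (n - 1)
  have hhalf : (1 / 2 : ℂ) ∈ ball (0 : ℂ) 1 := by rw [mem_ball_zero_iff]; norm_num
  have hS := (weight_mul_norm_pow_pos (α := α) (n - 1) hhalf (by norm_num)).trans_le
    (le_sSup_setOf_exists_eq hbound hhalf)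
  exact mul_norm_pow_div_mul_div_le hn hz0 hS
    (le_sSup_setOf_exists_eq hbound hz) (hgb z hz)

/-- Example 5.3: 0 is an approximate eigenvalue of the generalized Alexander
operator C_g on B_α^0: with h_n(z) = z^n/(n ‖z^n/n‖_{B_α}) of unit norm, the Bloch
seminorm of C_g(h_n), i.e. sup (1-|z|²)^α |h_n(z) g(z)/z|, is at most ‖g‖_∞/n → 0. -/
theorem stmt_18 (α C : ℝ) (hα : 0 < α) (g : ℂ → ℂ)
    (hg : DifferentiableOn ℂ g (Metric.ball (0:ℂ) 1))
    (hgb : ∀ z ∈ Metric.ball (0:ℂ) 1, ‖g z‖ ≤ C) :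
    (∀ n : ℕ, 1 ≤ n → ∀ z ∈ Metric.ball (0:ℂ) 1, z ≠ 0 →
      (1 - ‖z‖ ^ 2) ^ α *
        ‖(z ^ n / (n * (sSup {c : ℝ | ∃ w ∈ Metric.ball (0:ℂ) 1,
            c = (1 - ‖w‖ ^ 2) ^ α * ‖deriv (fun u : ℂ => u ^ n / n) w‖} : ℝ))) *
          g z / z‖ ≤ C / n) ∧
    Tendsto (fun n : ℕ => C / (n : ℝ)) atTop (nhds 0) :=
  stmt_18_general α C hα g hgb
end

section
/- For α > 0 and every g ∈ B_α^0, the function f(z) = z(1-z)g'(z) belongs to B_{α+1}^0 and satisfies C_1(f) = g, i.e. g(z) = ∫_0^z f(w)/(w(1-w)) dw. In particular B_α^0 is contained in the range of the Cesàro operator C_1 : B_{α+1}^0 → B_{α+1}^0. The key estimate is sup_{z∈D}(1-|z|^2)^{α+1}|f'(z)| ≤ 3 sup_{z∈D}(1-|z|^2)^α |g'(z)| + 2 sup_{z∈D}(1-|z|^2)^{α+1}|g''(z)| < ∞. -/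
/-!
Write `f(z) = z(1-z)g'(z)`, so that `f' = (1-2z)g' + z(1-z)g''` and `|1-2z| ≤ 3`, `|z(1-z)| ≤ 2`
on the disk. Since `(1-|z|²)^(α+1) ≤ (1-|z|²)^α`, the weighted bound on `f'` follows from those on
`g'` and on `g''`. The latter is the growth estimate for derivatives of Bloch-type functions: the
Cauchy estimate on the circle of radius `(1-|z|)/2` about `z`, on which `1-|w|² ≥ (1-|z|)/2`.
-/

open Metric Set

lemma setOf_exists_mem_eq_image {X Y : Type*} (s : Set X) (F : X → Y) :
    {c | ∃ z ∈ s, c = F z} = F '' s :=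
  Set.ext fun _ => exists_congr fun _ => and_congr_right' eq_comm

lemma one_sub_norm_le_of_norm_sub_le {E : Type*} [SeminormedAddCommGroup E] {z w : E}
    (h : ‖w - z‖ ≤ (1 - ‖z‖) / 2) : (1 - ‖z‖) / 2 ≤ 1 - ‖w‖ := by
  linarith [norm_le_norm_add_norm_sub' w z]

theorem one_sub_norm_sq_rpow_mul_norm_deriv_le {E : Type*} [NormedAddCommGroup E]
    [NormedSpace ℂ E] {α M : ℝ} (hα : 0 ≤ α) {f : ℂ → E}
    (hf : DifferentiableOn ℂ f (ball 0 1))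
    (hM : ∀ w ∈ ball (0 : ℂ) 1, (1 - ‖w‖ ^ 2) ^ α * ‖f w‖ ≤ M) {z : ℂ} (hz : z ∈ ball 0 1) :
    (1 - ‖z‖ ^ 2) ^ (α + 1) * ‖deriv f z‖ ≤ 4 ^ (α + 1) * M := by
  rw [mem_ball_zero_iff] at hz
  set R := (1 - ‖z‖) / 2 with hR_def
  have hR : 0 < R := by linarith
  have h_near : ∀ w ∈ closedBall z R, R ≤ 1 - ‖w‖ ^ 2 ∧ w ∈ ball (0 : ℂ) 1 := by
    intro w hw
    have h := one_sub_norm_le_of_norm_sub_le (mem_closedBall_iff_norm.1 hw)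
    exact ⟨by nlinarith [norm_nonneg w], mem_ball_zero_iff.2 (by linarith)⟩
  have h_cont : DiffContOnCl ℂ f (ball z R) := by
    refine DifferentiableOn.diffContOnCl ?_
    rw [closure_ball z hR.ne']
    exact hf.mono fun w hw => (h_near w hw).2
  have h_sphere : ∀ w ∈ sphere z R, ‖f w‖ ≤ M / R ^ α := by
    intro w hw
    obtain ⟨hRw, hw₁⟩ := h_near w (sphere_subset_closedBall hw)
    rw [le_div_iff₀ (Real.rpow_pos_of_pos hR α), mul_comm]
    calc R ^ α * ‖f w‖ ≤ (1 - ‖w‖ ^ 2) ^ α * ‖f w‖ := by gcongr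
      _ ≤ M := hM w hw₁
  have h_cauchy : ‖deriv f z‖ ≤ M / R ^ α / R :=
    Complex.norm_deriv_le_of_forall_mem_sphere_norm_le hR h_cont h_sphere
  calc (1 - ‖z‖ ^ 2) ^ (α + 1) * ‖deriv f z‖
      ≤ (4 * R) ^ (α + 1) * (M / R ^ α / R) := by
        gcongr <;> nlinarith [norm_nonneg z]
    _ = 4 ^ (α + 1) * M := by
        rw [Real.mul_rpow (by norm_num) hR.le, Real.rpow_add_one hR.ne']
        field_simp

lemma hasDerivAt_mul_one_sub_mul {𝕜 : Type*} [NontriviallyNormedField 𝕜] {f : 𝕜 → 𝕜}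
    {f' z : 𝕜} (hf : HasDerivAt f f' z) :
    HasDerivAt (fun w => w * (1 - w) * f w) ((1 - 2 * z) * f z + z * (1 - z) * f') z := by
  refine (((hasDerivAt_id' z).mul ((hasDerivAt_const z 1).sub (hasDerivAt_id' z))).mul hf)
    |>.congr_deriv ?_
  simp only [Pi.sub_apply, Pi.mul_apply]
  ring

lemma norm_deriv_mul_one_sub_mul_le {f : ℂ → ℂ} {z : ℂ} (hz : ‖z‖ ≤ 1)
    (hf : DifferentiableAt ℂ f z) :
    ‖deriv (fun w => w * (1 - w) * f w) z‖ ≤ 3 * ‖f z‖ + 2 * ‖deriv f z‖ := by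
  rw [(hasDerivAt_mul_one_sub_mul hf.hasDerivAt).deriv]
  have h₁ : ‖1 - 2 * z‖ ≤ 3 := by
    calc ‖1 - 2 * z‖ ≤ ‖(1 : ℂ)‖ + ‖2 * z‖ := norm_sub_le _ _
      _ ≤ 3 := by simp only [norm_one, norm_mul, Complex.norm_ofNat]; linarith
  have h₂ : ‖z * (1 - z)‖ ≤ 2 := by
    have : ‖1 - z‖ ≤ 2 := by
      calc ‖1 - z‖ ≤ ‖(1 : ℂ)‖ + ‖z‖ := norm_sub_le _ _
        _ ≤ 2 := by rw [norm_one]; linarith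
    rw [norm_mul]
    nlinarith [norm_nonneg z, norm_nonneg (1 - z)]
  calc ‖(1 - 2 * z) * f z + z * (1 - z) * deriv f z‖
      ≤ ‖1 - 2 * z‖ * ‖f z‖ + ‖z * (1 - z)‖ * ‖deriv f z‖ :=
        (norm_add_le _ _).trans_eq (by rw [norm_mul, norm_mul])
    _ ≤ 3 * ‖f z‖ + 2 * ‖deriv f z‖ := by gcongr

theorem one_sub_norm_sq_rpow_mul_norm_deriv_mul_one_sub_mul_le {f : ℂ → ℂ} {z : ℂ}
    (hz : z ∈ ball (0 : ℂ) 1) (hf : DifferentiableAt ℂ f z) (α : ℝ) :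
    (1 - ‖z‖ ^ 2) ^ (α + 1) * ‖deriv (fun w => w * (1 - w) * f w) z‖ ≤
      3 * ((1 - ‖z‖ ^ 2) ^ α * ‖f z‖) + 2 * ((1 - ‖z‖ ^ 2) ^ (α + 1) * ‖deriv f z‖) := by
  rw [mem_ball_zero_iff] at hz
  have h_pos : 0 < 1 - ‖z‖ ^ 2 := by nlinarith [norm_nonneg z]
  have h_le : (1 - ‖z‖ ^ 2) ^ (α + 1) ≤ (1 - ‖z‖ ^ 2) ^ α :=
    Real.rpow_le_rpow_of_exponent_ge h_pos (by nlinarith [norm_nonneg z]) (by linarith)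
  calc (1 - ‖z‖ ^ 2) ^ (α + 1) * ‖deriv (fun w => w * (1 - w) * f w) z‖
      ≤ (1 - ‖z‖ ^ 2) ^ (α + 1) * (3 * ‖f z‖ + 2 * ‖deriv f z‖) := by
        gcongr
        exact norm_deriv_mul_one_sub_mul_le hz.le hf
    _ ≤ 3 * ((1 - ‖z‖ ^ 2) ^ α * ‖f z‖) + 2 * ((1 - ‖z‖ ^ 2) ^ (α + 1) * ‖deriv f z‖) := by
        nlinarith [norm_nonneg (f z)]

theorem stmt_19_general (α : ℝ) (hα : 0 < α) (g : ℂ → ℂ)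
    (hg : DifferentiableOn ℂ g (Metric.ball (0:ℂ) 1))
    (hgB : BddAbove {c : ℝ | ∃ z ∈ Metric.ball (0:ℂ) 1,
      c = (1 - ‖z‖ ^ 2) ^ α * ‖deriv g z‖}) :
    DifferentiableOn ℂ (fun z : ℂ => z * (1 - z) * deriv g z) (Metric.ball (0:ℂ) 1) ∧
    (fun z : ℂ => z * (1 - z) * deriv g z) 0 = 0 ∧
    BddAbove {c : ℝ | ∃ z ∈ Metric.ball (0:ℂ) 1,
      c = (1 - ‖z‖ ^ 2) ^ (α + 1) * ‖deriv (deriv g) z‖} ∧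
    BddAbove {c : ℝ | ∃ z ∈ Metric.ball (0:ℂ) 1,
      c = (1 - ‖z‖ ^ 2) ^ (α + 1) *
        ‖deriv (fun w : ℂ => w * (1 - w) * deriv g w) z‖} ∧
    sSup {c : ℝ | ∃ z ∈ Metric.ball (0:ℂ) 1,
        c = (1 - ‖z‖ ^ 2) ^ (α + 1) *
          ‖deriv (fun w : ℂ => w * (1 - w) * deriv g w) z‖} ≤
      3 * sSup {c : ℝ | ∃ z ∈ Metric.ball (0:ℂ) 1,
          c = (1 - ‖z‖ ^ 2) ^ α * ‖deriv g z‖} +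
      2 * sSup {c : ℝ | ∃ z ∈ Metric.ball (0:ℂ) 1,
          c = (1 - ‖z‖ ^ 2) ^ (α + 1) * ‖deriv (deriv g) z‖} ∧
    (∀ z ∈ Metric.ball (0:ℂ) 1, z ≠ 0 →
      deriv g z = (z * (1 - z) * deriv g z) / (z * (1 - z))) := by
  simp only [setOf_exists_mem_eq_image] at hgB ⊢
  have hg' : DifferentiableOn ℂ (deriv g) (ball 0 1) := hg.deriv isOpen_ball
  have hB₁ := fun z (hz : z ∈ ball (0 : ℂ) 1) => le_csSup hgB (mem_image_of_mem _ hz)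
  have hB₂ : BddAbove ((fun z => (1 - ‖z‖ ^ 2) ^ (α + 1) * ‖deriv (deriv g) z‖) '' ball 0 1) :=
    ⟨_, forall_mem_image.2 fun z hz => one_sub_norm_sq_rpow_mul_norm_deriv_le hα.le hg' hB₁ hz⟩
  have h_key : ∀ z ∈ ball (0 : ℂ) 1,
      (1 - ‖z‖ ^ 2) ^ (α + 1) * ‖deriv (fun w => w * (1 - w) * deriv g w) z‖ ≤
        3 * sSup ((fun z => (1 - ‖z‖ ^ 2) ^ α * ‖deriv g z‖) '' ball 0 1) +
          2 * sSup ((fun z => (1 - ‖z‖ ^ 2) ^ (α + 1) * ‖deriv (deriv g) z‖) '' ball 0 1) :=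
    fun z hz => (one_sub_norm_sq_rpow_mul_norm_deriv_mul_one_sub_mul_le hz
      (hg'.differentiableAt (isOpen_ball.mem_nhds hz)) α).trans
        (by gcongr; exacts [hB₁ z hz, le_csSup hB₂ (mem_image_of_mem _ hz)])
  refine ⟨(differentiableOn_id.mul (differentiableOn_const 1 |>.sub differentiableOn_id)).mul hg',
    by simp, hB₂, ⟨_, forall_mem_image.2 h_key⟩,
    csSup_le ((nonempty_ball.2 one_pos).image _) (forall_mem_image.2 h_key), ?_⟩
  intro z hz hz₀
  have h_one_sub : 1 - z ≠ 0 := sub_ne_zero.2 fun h => by simp [← h] at hz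
  rw [mul_div_cancel_left₀ _ (mul_ne_zero hz₀ h_one_sub)]

/-- Section 6: for g ∈ B_α^0, f(z) = z(1-z)g'(z) lies in B_{α+1}^0 and C_1(f) = g
(i.e. g(0) = 0 and g'(z) = f(z)/(z(1-z)) on the punctured disk), with the key norm
estimate. Hence B_α^0 is contained in the range of the Cesàro operator on B_{α+1}^0. -/
theorem stmt_19 (α : ℝ) (hα : 0 < α) (g : ℂ → ℂ)
    (hg : DifferentiableOn ℂ g (Metric.ball (0:ℂ) 1)) (hg0 : g 0 = 0)
    (hgB : BddAbove {c : ℝ | ∃ z ∈ Metric.ball (0:ℂ) 1,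
      c = (1 - ‖z‖ ^ 2) ^ α * ‖deriv g z‖}) :
    DifferentiableOn ℂ (fun z : ℂ => z * (1 - z) * deriv g z) (Metric.ball (0:ℂ) 1) ∧
    (fun z : ℂ => z * (1 - z) * deriv g z) 0 = 0 ∧
    BddAbove {c : ℝ | ∃ z ∈ Metric.ball (0:ℂ) 1,
      c = (1 - ‖z‖ ^ 2) ^ (α + 1) * ‖deriv (deriv g) z‖} ∧
    BddAbove {c : ℝ | ∃ z ∈ Metric.ball (0:ℂ) 1,
      c = (1 - ‖z‖ ^ 2) ^ (α + 1) *
        ‖deriv (fun w : ℂ => w * (1 - w) * deriv g w) z‖} ∧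
    sSup {c : ℝ | ∃ z ∈ Metric.ball (0:ℂ) 1,
        c = (1 - ‖z‖ ^ 2) ^ (α + 1) *
          ‖deriv (fun w : ℂ => w * (1 - w) * deriv g w) z‖} ≤
      3 * sSup {c : ℝ | ∃ z ∈ Metric.ball (0:ℂ) 1,
          c = (1 - ‖z‖ ^ 2) ^ α * ‖deriv g z‖} +
      2 * sSup {c : ℝ | ∃ z ∈ Metric.ball (0:ℂ) 1,
          c = (1 - ‖z‖ ^ 2) ^ (α + 1) * ‖deriv (deriv g) z‖} ∧
    (∀ z ∈ Metric.ball (0:ℂ) 1, z ≠ 0 →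
      deriv g z = (z * (1 - z) * deriv g z) / (z * (1 - z))) :=
  stmt_19_general α hα g hg hgB
end
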